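/- arXiv:1903.12619 — 2 statements merged into one kernel-verified Lean document; each statement's English description precedes it below -/
import Mathlib

section
/- Let G be a closed subgroup of O(n), acting on the unit sphere S^(n-1) of ℝ^n. Then diam(S^(n-1)/G) = π if and only if G fixes some non-zero vector of ℝ^n. Otherwise diam(S^(n-1)/G) ≤ π/2, with equality if and only if the representation of G on ℝ^n is reducible (i.e., ℝ^n has a G-invariant linear subspace other than {0} and ℝ^n). -/
/-- The diameter of the quotient `S^(n-1)/G`: `sup_{x,y} inf_{g ∈ G} d(x, g·y)`, where
`d(x,y) = arccos ⟨x,y⟩` is the round (geodesic/angular) metric on the unit sphere of `ℝ^n`. -/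
noncomputable def sphereQuotDiam {n : ℕ} (G : Set (Matrix.orthogonalGroup (Fin n) ℝ)) : ℝ :=
  sSup {d : ℝ | ∃ x y : Fin n → ℝ, (∑ i, x i ^ 2) = 1 ∧ (∑ i, y i ^ 2) = 1 ∧
    d = sInf {r : ℝ | ∃ g ∈ G,
      r = Real.arccos (∑ i, x i * (g : Matrix (Fin n) (Fin n) ℝ).mulVec y i)}}

/-!
A closed subgroup `G ≤ O(n)` is compact, so its orbits are compact and the orbit angle
`(x, y) ↦ min_{g ∈ G} ∠(x, g y)` is continuous. If `G` fixes no nonzero vector, the point of least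
norm in the closed convex hull of an orbit `G y` is unique, hence fixed by `G`, hence `0`; so every
closed half-space `{q | 0 ≤ z ⬝ q}` meets `G y`, which gives `diam ≤ π/2`. A fixed unit vector `u`
gives the pair `(-u, u)` at distance `π`, and a proper invariant subspace `W` gives `x ⊥ W`,
`y ∈ W` at distance `π/2`. Conversely, if the diameter `π/2` is attained at `(x, y)`, then `G x`
pairs nonpositively with `G y`, and the invariant subspace `span (G x)` is proper: the sum `z` of a
finite basis drawn from `G x` pairs to `0` with some `q ∈ G y`, forcing the unit vector `q` to be
orthogonal to that basis.
-/

open Matrix Set Real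

theorem Matrix.isCompact_unitaryGroup {n 𝕜 : Type*} [Fintype n] [DecidableEq n] [RCLike 𝕜] :
    IsCompact (unitaryGroup n 𝕜 : Set (Matrix n n 𝕜)) := by
  have hclosed : IsClosed (unitaryGroup n 𝕜 : Set (Matrix n n 𝕜)) := by
    have : (unitaryGroup n 𝕜 : Set (Matrix n n 𝕜)) = {A | star A * A = 1} := by
      ext A; exact mem_unitaryGroup_iff'
    exact this ▸ isClosed_eq (continuous_star.mul continuous_id) continuous_const
  refine (isCompact_univ_pi fun _ => isCompact_univ_pi fun _ =>
    isCompact_closedBall (0 : 𝕜) 1).of_isClosed_subset hclosed fun U hU i _ j _ => ?_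
  simpa using entry_norm_bound_of_unitary hU i j

instance {n 𝕜 : Type*} [Fintype n] [DecidableEq n] [RCLike 𝕜] :
    CompactSpace (unitaryGroup n 𝕜) :=
  isCompact_iff_compactSpace.mp isCompact_unitaryGroup

section DotProduct

variable {ι : Type*} [Fintype ι]

def unitSphere (ι : Type*) [Fintype ι] : Set (ι → ℝ) := {v | v ⬝ᵥ v = 1}

theorem isCompact_unitSphere : IsCompact (unitSphere ι) := by
  refine (isCompact_univ_pi fun _ => isCompact_Icc (a := (-1 : ℝ)) (b := 1)).of_isClosed_subset
    (isClosed_eq (continuous_id.dotProduct continuous_id) continuous_const) fun v hv i _ => ?_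
  have : v i * v i ≤ 1 :=
    (Finset.single_le_sum (fun j _ => mul_self_nonneg (v j)) (Finset.mem_univ i)).trans_eq hv
  exact abs_le.1 (abs_le_one_iff_mul_self_le_one.2 this)

theorem ne_zero_of_mem_unitSphere {v : ι → ℝ} (hv : v ∈ unitSphere ι) : v ≠ 0 := by
  rintro rfl
  simp [unitSphere] at hv

theorem exists_smul_mem_unitSphere {v : ι → ℝ} (hv : v ≠ 0) : ∃ c : ℝ, c • v ∈ unitSphere ι := by
  have hpos : 0 < v ⬝ᵥ v := (Finset.sum_nonneg fun i _ => mul_self_nonneg (v i)).lt_of_ne'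
    (dotProduct_self_eq_zero.not.2 hv)
  refine ⟨(√(v ⬝ᵥ v))⁻¹, ?_⟩
  simp only [unitSphere, mem_ofPred_eq, smul_dotProduct, dotProduct_smul, smul_eq_mul]
  field_simp
  rw [sq_sqrt hpos.le]

theorem Submodule.exists_mem_unitSphere {W : Submodule ℝ (ι → ℝ)} (hW : W ≠ ⊥) :
    ∃ v ∈ W, v ∈ unitSphere ι := by
  obtain ⟨v, hvW, hv⟩ := W.exists_mem_ne_zero_of_ne_bot hW
  obtain ⟨c, hc⟩ := exists_smul_mem_unitSphere hv
  exact ⟨c • v, W.smul_mem c hvW, hc⟩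

theorem Submodule.exists_mem_unitSphere_forall_dotProduct_eq_zero [DecidableEq ι]
    {W : Submodule ℝ (ι → ℝ)} (hW : W ≠ ⊤) :
    ∃ x ∈ unitSphere ι, ∀ w ∈ W, x ⬝ᵥ w = 0 := by
  obtain ⟨f, hf, hWf⟩ := W.exists_le_ker_of_lt_top (lt_top_iff_ne_top.2 hW)
  have hx : (dotProductEquiv ℝ ι).symm f ≠ 0 := by simpa using hf
  obtain ⟨c, hc⟩ := exists_smul_mem_unitSphere hx
  refine ⟨_, hc, fun w hw => ?_⟩
  rw [smul_dotProduct, ← dotProductEquiv_apply_apply, LinearEquiv.apply_symm_apply, hWf hw,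
    smul_zero]

theorem eq_of_dotProduct_self_le_midpoint {c c' : ι → ℝ} (hcc' : c' ⬝ᵥ c' = c ⬝ᵥ c)
    (hmid : c ⬝ᵥ c ≤ ((1 / 2 : ℝ) • c + (1 / 2 : ℝ) • c') ⬝ᵥ ((1 / 2 : ℝ) • c + (1 / 2 : ℝ) • c')) :
    c' = c := by
  have hsq : (c - c') ⬝ᵥ (c - c') ≤ 0 := by
    simp only [add_dotProduct, dotProduct_add, sub_dotProduct, dotProduct_sub, smul_dotProduct,
      dotProduct_smul, smul_eq_mul, dotProduct_comm c' c] at hmid ⊢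
    linarith
  have := le_antisymm hsq (Finset.sum_nonneg fun i _ => mul_self_nonneg _)
  exact (sub_eq_zero.1 (dotProduct_self_eq_zero.1 this)).symm

theorem exists_dotProduct_nonneg_of_zero_mem_closedConvexHull {K : Set (ι → ℝ)}
    (hK : IsCompact K) (hKne : K.Nonempty) (h0 : (0 : ι → ℝ) ∈ closedConvexHull ℝ K)
    (z : ι → ℝ) : ∃ q ∈ K, 0 ≤ z ⬝ᵥ q := by
  obtain ⟨q, hqK, hmax⟩ :=
    hK.exists_isMaxOn hKne (continuous_const.dotProduct continuous_id).continuousOn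
  refine ⟨q, hqK, ?_⟩
  have : closedConvexHull ℝ K ⊆ {v | z ⬝ᵥ v ≤ z ⬝ᵥ q} :=
    closedConvexHull_min (fun v hv => hmax hv)
      (convex_halfSpace_le (dotProductBilin ℝ ℝ z).isLinear _)
      (isClosed_le (continuous_const.dotProduct continuous_id) continuous_const)
  simpa using this h0

theorem span_ne_top_of_dotProduct_nonpos {P K : Set (ι → ℝ)} (hK : ∀ z, ∃ q ∈ K, 0 ≤ z ⬝ᵥ q)
    (h0 : (0 : ι → ℝ) ∉ K) (hPK : ∀ p ∈ P, ∀ q ∈ K, p ⬝ᵥ q ≤ 0) :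
    Submodule.span ℝ P ≠ ⊤ := by
  intro htop
  obtain ⟨b, hbP, hspan, hli⟩ := exists_linearIndependent ℝ P
  have hb := hli.setFinite
  obtain ⟨q, hqK, hq⟩ := hK (∑ p ∈ hb.toFinset, p)
  rw [sum_dotProduct] at hq
  have hnonpos : ∀ p ∈ hb.toFinset, p ⬝ᵥ q ≤ 0 := fun p hp =>
    hPK p (hbP (hb.mem_toFinset.1 hp)) q hqK
  have hbq : ∀ p ∈ b, p ⬝ᵥ q = 0 := fun p hp =>
    (Finset.sum_eq_zero_iff_of_nonpos hnonpos).1 ((Finset.sum_nonpos hnonpos).antisymm hq) p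
      (hb.mem_toFinset.2 hp)
  have hker : Submodule.span ℝ b ≤ LinearMap.ker ((dotProductBilin ℝ ℝ).flip q) :=
    Submodule.span_le.2 hbq
  rw [hspan, htop] at hker
  have hqq : q ⬝ᵥ q = 0 := hker Submodule.mem_top
  exact h0 (dotProduct_self_eq_zero.1 hqq ▸ hqK)

end DotProduct

section OrthogonalAction

variable {ι : Type*} [Fintype ι] [DecidableEq ι]

theorem dotProduct_mulVec_mulVec_of_mem_orthogonalGroup {A : Matrix ι ι ℝ}
    (hA : A ∈ orthogonalGroup ι ℝ) (x y : ι → ℝ) :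
    (A *ᵥ x) ⬝ᵥ (A *ᵥ y) = x ⬝ᵥ y := by
  rw [dotProduct_mulVec, ← mulVec_transpose, mulVec_mulVec, (mem_orthogonalGroup_iff' ι ℝ).1 hA,
    one_mulVec]

theorem exists_mem_forall_mulVec_eq_of_isCompact {G : Set (orthogonalGroup ι ℝ)}
    {K : Set (ι → ℝ)} (hK : IsCompact K) (hKconv : Convex ℝ K) (hKne : K.Nonempty)
    (hGK : ∀ g ∈ G, ∀ v ∈ K, (g : Matrix ι ι ℝ) *ᵥ v ∈ K) :
    ∃ c ∈ K, ∀ g ∈ G, (g : Matrix ι ι ℝ) *ᵥ c = c := by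
  obtain ⟨c, hcK, hmin⟩ :=
    hK.exists_isMinOn hKne (continuous_id.dotProduct continuous_id).continuousOn
  refine ⟨c, hcK, fun g hg => eq_of_dotProduct_self_le_midpoint
    (dotProduct_mulVec_mulVec_of_mem_orthogonalGroup g.2 c c) (hmin ?_)⟩
  exact hKconv hcK (hGK g hg c hcK) (by norm_num) (by norm_num) (by norm_num)

def orbit (G : Set (orthogonalGroup ι ℝ)) (y : ι → ℝ) : Set (ι → ℝ) :=
  (fun g : orthogonalGroup ι ℝ => (g : Matrix ι ι ℝ) *ᵥ y) '' G

variable {G : Subgroup (orthogonalGroup ι ℝ)}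

theorem self_mem_orbit (y : ι → ℝ) : y ∈ orbit G y :=
  ⟨1, G.one_mem, one_mulVec y⟩

theorem mulVec_mem_orbit {g : orthogonalGroup ι ℝ} (hg : g ∈ G) {y q : ι → ℝ}
    (hq : q ∈ orbit G y) : (g : Matrix ι ι ℝ) *ᵥ q ∈ orbit G y := by
  obtain ⟨h, hh, rfl⟩ := hq
  exact ⟨g * h, G.mul_mem hg hh, (mulVec_mulVec _ _ _).symm⟩

theorem isCompact_orbit (hG : IsCompact (G : Set (orthogonalGroup ι ℝ))) (y : ι → ℝ) :
    IsCompact (orbit G y) :=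
  hG.image (by fun_prop)

theorem orbit_subset_unitSphere {y : ι → ℝ} (hy : y ∈ unitSphere ι) :
    orbit G y ⊆ unitSphere ι := by
  rintro _ ⟨g, -, rfl⟩
  exact (dotProduct_mulVec_mulVec_of_mem_orthogonalGroup g.2 y y).trans hy

theorem exists_dotProduct_eq_of_mem_orbit {x y p q : ι → ℝ} (hp : p ∈ orbit G x)
    (hq : q ∈ orbit G y) : ∃ g ∈ G, p ⬝ᵥ q = x ⬝ᵥ (g : Matrix ι ι ℝ) *ᵥ y := by
  obtain ⟨g, hg, rfl⟩ := hp
  obtain ⟨h, hh, rfl⟩ := hq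
  refine ⟨g⁻¹ * h, G.mul_mem (G.inv_mem hg) hh, ?_⟩
  have hgh : (h : Matrix ι ι ℝ) = g * (g⁻¹ * h : orthogonalGroup ι ℝ) := by
    rw [← UnitaryGroup.mul_val, mul_inv_cancel_left]
  change ((g : Matrix ι ι ℝ) *ᵥ x) ⬝ᵥ ((h : Matrix ι ι ℝ) *ᵥ y) = _
  rw [hgh, ← mulVec_mulVec, dotProduct_mulVec_mulVec_of_mem_orthogonalGroup g.2]

theorem mulVec_mem_span_orbit {g : orthogonalGroup ι ℝ} (hg : g ∈ G) {x v : ι → ℝ}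
    (hv : v ∈ Submodule.span ℝ (orbit G x)) :
    (g : Matrix ι ι ℝ) *ᵥ v ∈ Submodule.span ℝ (orbit G x) := by
  have := Submodule.mem_map_of_mem (f := mulVecLin (g : Matrix ι ι ℝ)) hv
  rw [Submodule.map_span] at this
  refine Submodule.span_mono ?_ this
  rintro _ ⟨q, hq, rfl⟩
  exact mulVec_mem_orbit hg hq

theorem zero_mem_closedConvexHull_orbit (hG : IsCompact (G : Set (orthogonalGroup ι ℝ)))
    (hfix : ¬ ∃ v : ι → ℝ, v ≠ 0 ∧ ∀ g ∈ G, (g : Matrix ι ι ℝ) *ᵥ v = v) (y : ι → ℝ) :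
    (0 : ι → ℝ) ∈ closedConvexHull ℝ (orbit G y) := by
  set K := closedConvexHull ℝ (orbit G y)
  have hK : IsCompact K := by
    refine Metric.isCompact_of_isClosed_isBounded isClosed_closedConvexHull ?_
    rw [show K = closure (convexHull ℝ (orbit G y)) from closedConvexHull_eq_closure_convexHull]
    exact (isBounded_convexHull.2 (isCompact_orbit hG y).isBounded).closure
  have hGK : ∀ g ∈ G, ∀ v ∈ K, (g : Matrix ι ι ℝ) *ᵥ v ∈ K := fun g hg =>
    closedConvexHull_min (fun q hq => subset_closedConvexHull (mulVec_mem_orbit hg hq))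
      (convex_closedConvexHull.linear_preimage (mulVecLin (g : Matrix ι ι ℝ)))
      (isClosed_closedConvexHull.preimage (by fun_prop))
  obtain ⟨c, hcK, hc⟩ := exists_mem_forall_mulVec_eq_of_isCompact hK convex_closedConvexHull
    ⟨y, subset_closedConvexHull (self_mem_orbit y)⟩ hGK
  obtain rfl : c = 0 := by_contra fun h => hfix ⟨c, h, hc⟩
  exact hcK

theorem exists_mem_orbit_dotProduct_nonneg (hG : IsCompact (G : Set (orthogonalGroup ι ℝ)))
    (hfix : ¬ ∃ v : ι → ℝ, v ≠ 0 ∧ ∀ g ∈ G, (g : Matrix ι ι ℝ) *ᵥ v = v) (y z : ι → ℝ) :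
    ∃ q ∈ orbit G y, 0 ≤ z ⬝ᵥ q :=
  exists_dotProduct_nonneg_of_zero_mem_closedConvexHull (isCompact_orbit hG y)
    ⟨y, self_mem_orbit y⟩ (zero_mem_closedConvexHull_orbit hG hfix y) z

end OrthogonalAction

section OrbitAngle

variable {ι : Type*} [Fintype ι] [DecidableEq ι] {G : Set (orthogonalGroup ι ℝ)} {x y : ι → ℝ}

noncomputable def orbitAngle (G : Set (orthogonalGroup ι ℝ)) (x y : ι → ℝ) : ℝ :=
  sInf ((fun g : orthogonalGroup ι ℝ => arccos (x ⬝ᵥ (g : Matrix ι ι ℝ) *ᵥ y)) '' G)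

theorem orbitAngle_le {g : orthogonalGroup ι ℝ} (hg : g ∈ G) :
    orbitAngle G x y ≤ arccos (x ⬝ᵥ (g : Matrix ι ι ℝ) *ᵥ y) :=
  csInf_le ⟨0, forall_mem_image.2 fun _ _ => arccos_nonneg _⟩ (mem_image_of_mem _ hg)

theorem orbitAngle_le_pi (hG : G.Nonempty) : orbitAngle G x y ≤ π :=
  (orbitAngle_le hG.some_mem).trans (arccos_le_pi _)

theorem orbitAngle_le_pi_div_two {g : orthogonalGroup ι ℝ} (hg : g ∈ G)
    (h : 0 ≤ x ⬝ᵥ (g : Matrix ι ι ℝ) *ᵥ y) : orbitAngle G x y ≤ π / 2 :=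
  (orbitAngle_le hg).trans (arccos_le_pi_div_two.2 h)

theorem orbitAngle_eq_arccos (hG : G.Nonempty) {c : ℝ}
    (h : ∀ g ∈ G, x ⬝ᵥ (g : Matrix ι ι ℝ) *ᵥ y = c) : orbitAngle G x y = arccos c := by
  rw [orbitAngle, image_congr (g := fun _ => arccos c) fun g hg => by rw [h g hg],
    hG.image_const, csInf_singleton]

theorem dotProduct_mulVec_nonpos_of_pi_div_two_le_orbitAngle (h : π / 2 ≤ orbitAngle G x y)
    {g : orthogonalGroup ι ℝ} (hg : g ∈ G) : x ⬝ᵥ (g : Matrix ι ι ℝ) *ᵥ y ≤ 0 :=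
  not_lt.1 fun hpos => (h.trans (orbitAngle_le hg)).not_gt (arccos_lt_pi_div_two.2 hpos)

theorem continuous_orbitAngle (hG : IsCompact G) : Continuous (Function.uncurry (orbitAngle G)) :=
  hG.continuous_sInf (f := fun (p : (ι → ℝ) × (ι → ℝ)) (g : orthogonalGroup ι ℝ) =>
    arccos (p.1 ⬝ᵥ (g : Matrix ι ι ℝ) *ᵥ p.2)) (by fun_prop)

end OrbitAngle

section Diameter

variable {n : ℕ}

theorem sphereQuotDiam_eq_sSup (G : Set (orthogonalGroup (Fin n) ℝ)) :
    sphereQuotDiam G =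
      sSup (Function.uncurry (orbitAngle G) '' unitSphere (Fin n) ×ˢ unitSphere (Fin n)) := by
  have hS : ∀ v : Fin n → ℝ, (∑ i, v i ^ 2 = 1) ↔ v ∈ unitSphere (Fin n) := by
    simp [unitSphere, dotProduct, sq]
  have hA : ∀ x y : Fin n → ℝ, sInf {r | ∃ g ∈ G,
      r = arccos (∑ i, x i * (g : Matrix (Fin n) (Fin n) ℝ).mulVec y i)} = orbitAngle G x y :=
    fun x y => congrArg sInf <| ext fun r =>
      ⟨fun ⟨g, hg, h⟩ => ⟨g, hg, h.symm⟩, fun ⟨g, hg, h⟩ => ⟨g, hg, h.symm⟩⟩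
  simp only [sphereQuotDiam, hS, hA]
  congr 1
  ext d
  simp [eq_comm]

theorem sphereQuotDiam_le {G : Set (orthogonalGroup (Fin n) ℝ)} {a : ℝ} (ha : 0 ≤ a)
    (h : ∀ x ∈ unitSphere (Fin n), ∀ y ∈ unitSphere (Fin n), orbitAngle G x y ≤ a) :
    sphereQuotDiam G ≤ a := by
  rw [sphereQuotDiam_eq_sSup]
  exact Real.sSup_le (forall_mem_image.2 fun p hp => h p.1 hp.1 p.2 hp.2) ha

theorem orbitAngle_le_sphereQuotDiam {G : Set (orthogonalGroup (Fin n) ℝ)} (hG : G.Nonempty)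
    {x y : Fin n → ℝ} (hx : x ∈ unitSphere (Fin n)) (hy : y ∈ unitSphere (Fin n)) :
    orbitAngle G x y ≤ sphereQuotDiam G := by
  rw [sphereQuotDiam_eq_sSup]
  exact le_csSup ⟨π, forall_mem_image.2 fun _ _ => orbitAngle_le_pi hG⟩
    ⟨(x, y), mk_mem_prod hx hy, rfl⟩

theorem exists_orbitAngle_eq_sphereQuotDiam {G : Set (orthogonalGroup (Fin n) ℝ)}
    (hG : IsCompact G) (hd : sphereQuotDiam G ≠ 0) :
    ∃ x ∈ unitSphere (Fin n), ∃ y ∈ unitSphere (Fin n), orbitAngle G x y = sphereQuotDiam G := by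
  rw [sphereQuotDiam_eq_sSup] at hd ⊢
  -- for `n = 0` the sphere is empty and `sSup ∅ = 0`
  obtain ⟨⟨x, y⟩, ⟨hx, hy⟩, hxy⟩ := ((isCompact_unitSphere.prod isCompact_unitSphere).image
    (continuous_orbitAngle hG)).sSup_mem
    (nonempty_iff_ne_empty.2 fun h => hd (by rw [h, Real.sSup_empty]))
  exact ⟨x, hx, y, hy, hxy⟩

variable {G : Subgroup (orthogonalGroup (Fin n) ℝ)}

theorem sphereQuotDiam_eq_pi
    (hv : ∃ v : Fin n → ℝ, v ≠ 0 ∧ ∀ g ∈ G, (g : Matrix (Fin n) (Fin n) ℝ) *ᵥ v = v) :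
    sphereQuotDiam (G : Set (orthogonalGroup (Fin n) ℝ)) = π := by
  obtain ⟨v, hv0, hvG⟩ := hv
  obtain ⟨c, hc⟩ := exists_smul_mem_unitSphere hv0
  have hGne : (G : Set (orthogonalGroup (Fin n) ℝ)).Nonempty := ⟨1, G.one_mem⟩
  have hangle : orbitAngle G (-(c • v)) (c • v) = arccos (-1) :=
    orbitAngle_eq_arccos hGne fun g hg => by
      rw [mulVec_smul, hvG g hg, neg_dotProduct, show c • v ⬝ᵥ c • v = 1 from hc]
  refine (sphereQuotDiam_le pi_pos.le fun _ _ _ _ => orbitAngle_le_pi hGne).antisymm ?_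
  calc π = orbitAngle G (-(c • v)) (c • v) := by rw [hangle, arccos_neg_one]
    _ ≤ _ := orbitAngle_le_sphereQuotDiam hGne (by simpa [unitSphere] using hc) hc

theorem sphereQuotDiam_le_pi_div_two (hG : IsCompact (G : Set (orthogonalGroup (Fin n) ℝ)))
    (hfix : ¬ ∃ v : Fin n → ℝ, v ≠ 0 ∧ ∀ g ∈ G, (g : Matrix (Fin n) (Fin n) ℝ) *ᵥ v = v) :
    sphereQuotDiam (G : Set (orthogonalGroup (Fin n) ℝ)) ≤ π / 2 :=
  sphereQuotDiam_le pi_div_two_pos.le fun x _ y _ => by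
    obtain ⟨_, ⟨g, hg, rfl⟩, h⟩ := exists_mem_orbit_dotProduct_nonneg hG hfix y x
    exact orbitAngle_le_pi_div_two hg h

theorem pi_div_two_le_sphereQuotDiam {W : Submodule ℝ (Fin n → ℝ)} (hW₀ : W ≠ ⊥) (hW₁ : W ≠ ⊤)
    (hWG : ∀ g ∈ G, ∀ v ∈ W, (g : Matrix (Fin n) (Fin n) ℝ) *ᵥ v ∈ W) :
    π / 2 ≤ sphereQuotDiam (G : Set (orthogonalGroup (Fin n) ℝ)) := by
  obtain ⟨y, hyW, hy⟩ := W.exists_mem_unitSphere hW₀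
  obtain ⟨x, hx, hxW⟩ := W.exists_mem_unitSphere_forall_dotProduct_eq_zero hW₁
  have hGne : (G : Set (orthogonalGroup (Fin n) ℝ)).Nonempty := ⟨1, G.one_mem⟩
  calc π / 2 = orbitAngle G x y := by
        rw [orbitAngle_eq_arccos hGne fun g hg => hxW _ (hWG g hg y hyW), arccos_zero]
    _ ≤ _ := orbitAngle_le_sphereQuotDiam hGne hx hy

theorem exists_invariant_submodule_of_sphereQuotDiam_eq_pi_div_two
    (hG : IsCompact (G : Set (orthogonalGroup (Fin n) ℝ)))
    (hfix : ¬ ∃ v : Fin n → ℝ, v ≠ 0 ∧ ∀ g ∈ G, (g : Matrix (Fin n) (Fin n) ℝ) *ᵥ v = v)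
    (hd : sphereQuotDiam (G : Set (orthogonalGroup (Fin n) ℝ)) = π / 2) :
    ∃ W : Submodule ℝ (Fin n → ℝ), W ≠ ⊥ ∧ W ≠ ⊤ ∧
      ∀ g ∈ G, ∀ v ∈ W, (g : Matrix (Fin n) (Fin n) ℝ) *ᵥ v ∈ W := by
  obtain ⟨x, hx, y, hy, hxy⟩ :=
    exists_orbitAngle_eq_sphereQuotDiam hG (hd ▸ pi_div_two_pos.ne')
  have hneg : ∀ p ∈ orbit G x, ∀ q ∈ orbit G y, p ⬝ᵥ q ≤ 0 := fun p hp q hq => by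
    obtain ⟨g, hg, hpq⟩ := exists_dotProduct_eq_of_mem_orbit hp hq
    exact hpq ▸ dotProduct_mulVec_nonpos_of_pi_div_two_le_orbitAngle (hxy.trans hd).ge hg
  have hy0 : (0 : Fin n → ℝ) ∉ orbit G y := fun h0 =>
    ne_zero_of_mem_unitSphere (orbit_subset_unitSphere hy h0) rfl
  refine ⟨Submodule.span ℝ (orbit G x), (Submodule.ne_bot_iff _).2 ⟨x,
      Submodule.subset_span (self_mem_orbit x), ne_zero_of_mem_unitSphere hx⟩,
    span_ne_top_of_dotProduct_nonpos (exists_mem_orbit_dotProduct_nonneg hG hfix y) hy0 hneg,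
    fun g hg v hv => mulVec_mem_span_orbit hg hv⟩

end Diameter

/-- Let `G ⊆ O(n)` be a closed subgroup. Then `diam (S^(n-1)/G) = π` iff `G` fixes a
non-zero vector; otherwise `diam (S^(n-1)/G) ≤ π/2`, with equality precisely when the
representation of `G` on `ℝ^n` is reducible. -/
theorem sphereQuotDiam_reducibility (n : ℕ)
    (G : Subgroup (Matrix.orthogonalGroup (Fin n) ℝ))
    (hG : IsClosed (G : Set (Matrix.orthogonalGroup (Fin n) ℝ))) :
    (sphereQuotDiam (G : Set (Matrix.orthogonalGroup (Fin n) ℝ)) = Real.pi ↔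
      ∃ v : Fin n → ℝ, v ≠ 0 ∧ ∀ g ∈ G, (g : Matrix (Fin n) (Fin n) ℝ).mulVec v = v) ∧
    ((¬ ∃ v : Fin n → ℝ, v ≠ 0 ∧ ∀ g ∈ G, (g : Matrix (Fin n) (Fin n) ℝ).mulVec v = v) →
      sphereQuotDiam (G : Set (Matrix.orthogonalGroup (Fin n) ℝ)) ≤ Real.pi / 2 ∧
      (sphereQuotDiam (G : Set (Matrix.orthogonalGroup (Fin n) ℝ)) = Real.pi / 2 ↔
        ∃ W : Submodule ℝ (Fin n → ℝ), W ≠ ⊥ ∧ W ≠ ⊤ ∧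
          ∀ g ∈ G, ∀ v ∈ W, (g : Matrix (Fin n) (Fin n) ℝ).mulVec v ∈ W)) := by
  have hGc : IsCompact (G : Set (orthogonalGroup (Fin n) ℝ)) := hG.isCompact
  refine ⟨⟨fun hd => ?_, sphereQuotDiam_eq_pi⟩, fun hfix =>
    ⟨sphereQuotDiam_le_pi_div_two hGc hfix,
      exists_invariant_submodule_of_sphereQuotDiam_eq_pi_div_two hGc hfix,
      fun ⟨_, hW₀, hW₁, hWG⟩ => (sphereQuotDiam_le_pi_div_two hGc hfix).antisymm
        (pi_div_two_le_sphereQuotDiam hW₀ hW₁ hWG)⟩⟩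
  by_contra hfix
  linarith [sphereQuotDiam_le_pi_div_two hGc hfix, pi_pos]
end

section
/- Let G be a compact group acting continuously by isometries on a metric space X, let N be a closed normal subgroup of G, and suppose there exists a point p ∈ X whose G-orbit coincides with its N-orbit, i.e., G·p = N·p. Then diam(X/G) ≥ (1/2) · diam(X/N). -/
/-!
Put `D = diam (X/G)`. Every `g • p` is some `n • p` with `n ∈ N`, so the `N`-orbit distance from any
point to `p` is at most its `G`-orbit distance, hence at most `D`. The triangle inequality for
orbit distances, taken through `p`, then bounds every `N`-orbit distance by `2 D`.
-/

open MulAction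

instance Subgroup.isIsometricSMul {G X : Type*} [Group G] [PseudoEMetricSpace X] [MulAction G X]
    [IsIsometricSMul G X] (N : Subgroup G) : IsIsometricSMul N X :=
  ⟨fun n => isometry_smul X (n : G)⟩

section IsometricAction

variable {H X : Type*} [Group H] [PseudoEMetricSpace X] [MulAction H X] [IsIsometricSMul H X]

theorem iInf_edist_smul_le_iInf_edist_smul_swap (x y : X) :
    ⨅ h : H, edist x (h • y) ≤ ⨅ h : H, edist y (h • x) :=
  le_iInf fun h => (iInf_le _ h⁻¹).trans_eq <| by
    rw [← edist_smul_left h, smul_inv_smul, edist_comm]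

theorem iInf_edist_smul_comm (x y : X) :
    ⨅ h : H, edist x (h • y) = ⨅ h : H, edist y (h • x) :=
  le_antisymm (iInf_edist_smul_le_iInf_edist_smul_swap x y)
    (iInf_edist_smul_le_iInf_edist_smul_swap y x)

theorem iInf_edist_smul_le_add (x y z : X) :
    ⨅ h : H, edist x (h • z) ≤ (⨅ h : H, edist x (h • y)) + ⨅ h : H, edist y (h • z) := by
  rw [ENNReal.iInf_add]
  refine le_iInf fun a => ?_
  rw [ENNReal.add_iInf]
  refine le_iInf fun b => ?_
  calc ⨅ h : H, edist x (h • z) ≤ edist x ((a * b) • z) := iInf_le _ _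
    _ ≤ edist x (a • y) + edist (a • y) ((a * b) • z) := edist_triangle _ _ _
    _ = edist x (a • y) + edist y (b • z) := by rw [mul_smul, edist_smul_left]

end IsometricAction

theorem iInf_subgroup_smul_le_of_orbit_subset {G X α : Type*} [Group G] [MulAction G X]
    [CompleteLattice α] (N : Subgroup G) {p : X} (horbit : orbit G p ⊆ orbit N p) (f : X → α) :
    ⨅ n : N, f (n • p) ≤ ⨅ g : G, f (g • p) :=
  le_iInf fun g => by
    obtain ⟨n, hn⟩ := horbit (mem_orbit p g)
    exact (iInf_le _ n).trans_eq (congrArg f hn)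

theorem iSup_iInf_subgroup_edist_smul_le_two_mul {G X : Type*} [Group G] [PseudoEMetricSpace X]
    [MulAction G X] [IsIsometricSMul G X] (N : Subgroup G) {p : X}
    (horbit : orbit G p ⊆ orbit N p) :
    ⨆ x : X, ⨆ y : X, ⨅ n : N, edist x (n • y) ≤
      2 * ⨆ x : X, ⨆ y : X, ⨅ g : G, edist x (g • y) := by
  set D := ⨆ x : X, ⨆ y : X, ⨅ g : G, edist x (g • y)
  have to_p (x : X) : ⨅ n : N, edist x (n • p) ≤ D :=
    (iInf_subgroup_smul_le_of_orbit_subset N horbit (edist x)).trans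
      (le_iSup₂ (f := fun x y => ⨅ g : G, edist x (g • y)) x p)
  refine iSup₂_le fun x y => ?_
  calc ⨅ n : N, edist x (n • y)
      ≤ (⨅ n : N, edist x (n • p)) + ⨅ n : N, edist p (n • y) := iInf_edist_smul_le_add x p y
    _ ≤ D + D := add_le_add (to_p x) ((iInf_edist_smul_comm p y).trans_le (to_p y))
    _ = 2 * D := (two_mul D).symm

theorem quotient_diam_ge_half_of_common_orbit_general
    (G X : Type*) [Group G]
    [MetricSpace X] [MulAction G X]
    (hisom : ∀ g : G, Isometry fun x : X => g • x)
    (N : Subgroup G)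
    (p : X) (horbit : MulAction.orbit G p = MulAction.orbit N p) :
    (⨆ x : X, ⨆ y : X, ⨅ h : N, edist x (h • y)) / 2 ≤
      ⨆ x : X, ⨆ y : X, ⨅ g : G, edist x (g • y) := by
  have : IsIsometricSMul G X := ⟨hisom⟩
  exact ENNReal.div_le_of_le_mul' (iSup_iInf_subgroup_edist_smul_le_two_mul N horbit.subset)

/-- Let `G` be a compact group acting continuously by isometries on a metric space `X`,
let `N` be a closed normal subgroup of `G`, and suppose there is a point `p ∈ X` with
`G·p = N·p`. Then `diam (X/G) ≥ (1/2) ⬝ diam (X/N)`, where for a group `H` acting on `X`,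
`diam (X/H) = sup_{x,y} inf_{h ∈ H} d(x, h·y)`. -/
theorem quotient_diam_ge_half_of_common_orbit
    (G X : Type*) [Group G] [TopologicalSpace G] [IsTopologicalGroup G] [CompactSpace G]
    [MetricSpace X] [MulAction G X]
    (hcont : Continuous fun p : G × X => p.1 • p.2)
    (hisom : ∀ g : G, Isometry fun x : X => g • x)
    (N : Subgroup G) (hNnormal : N.Normal) (hNclosed : IsClosed (N : Set G))
    (p : X) (horbit : MulAction.orbit G p = MulAction.orbit N p) :
    (⨆ x : X, ⨆ y : X, ⨅ h : N, edist x (h • y)) / 2 ≤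
      ⨆ x : X, ⨆ y : X, ⨅ g : G, edist x (g • y) :=
  quotient_diam_ge_half_of_common_orbit_general G X hisom N p horbit
end
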